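/- (Key lemma of Arthur–Vassilvitskii D² sampling, restricted to one cluster.) Let A ⊆ ℝ^d be a nonempty finite set with mean μ = (1/|A|)∑_{x∈A} x, and let S ⊆ ℝ^d be a nonempty finite set of centers with φ_A(S) > 0. Then ∑_{x∈A} (φ_{{x}}(S)/φ_A(S)) · φ_A(S ∪ {x}) ≤ 8·φ_A({μ}); i.e., if a point x is sampled from A with probability proportional to φ_{{x}}(S), the expected cost of A after adding x as a center is at most 8·φ_A({μ}). -/

import Mathlib

open Finset

open scoped Classical

/-- `phiPt x S` is the squared distance from `x` to its nearest center in `S`,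
i.e. `min_{s ∈ S} ‖x - s‖²`. -/
noncomputable def phiPt {d : ℕ} (x : EuclideanSpace ℝ (Fin d))
    (S : Finset (EuclideanSpace ℝ (Fin d))) : ℝ :=
  sInf ((fun s => ‖x - s‖ ^ 2) '' (S : Set (EuclideanSpace ℝ (Fin d))))

/-- `phi A S = ∑_{x ∈ A} min_{s ∈ S} ‖x - s‖²`, the `k`-means cost of centers `S` on `A`. -/
noncomputable def phi {d : ℕ} (A S : Finset (EuclideanSpace ℝ (Fin d))) : ℝ :=
  ∑ x ∈ A, phiPt x S

/-- The mean (centroid) of a finite set of points. -/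
noncomputable def mean {d : ℕ} (A : Finset (EuclideanSpace ℝ (Fin d))) :
    EuclideanSpace ℝ (Fin d) :=
  (A.card : ℝ)⁻¹ • ∑ x ∈ A, x

/-- `rho X S z` is the cost of the centers `S` on `X` after discarding the `z`
points of `X` farthest from `S`: the minimum of `phi Y S` over `Y ⊆ X` with
`|Y| = |X| - z`. -/
noncomputable def rho {d : ℕ} (X S : Finset (EuclideanSpace ℝ (Fin d))) (z : ℕ) : ℝ :=
  sInf ((fun Y : Finset (EuclideanSpace ℝ (Fin d)) => phi Y S) ''
    {Y : Finset (EuclideanSpace ℝ (Fin d)) | Y ⊆ X ∧ Y.card = X.card - z})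

/-!
Triangle inequality at the nearest center of each `a ∈ A` gives
`|A| φ_{{x}}(S) ≤ 2 φ_A(S) + 2 φ_A({x})`, while `φ_A(S ∪ {x})` is at most both `φ_A(S)` and
`φ_A({x})`. Hence `|A| φ_{{x}}(S) φ_A(S ∪ {x}) ≤ 4 φ_A(S) φ_A({x})`, and summing over `x`
with `∑_{x ∈ A} φ_A({x}) ≤ 2 |A| φ_A({μ})` (true for every point `μ`) gives the factor `8`.
-/

theorem sum_sum_norm_sub_sq_le {E : Type*} [NormedAddCommGroup E] [InnerProductSpace ℝ E]
    (A : Finset E) (μ : E) :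
    ∑ x ∈ A, ∑ a ∈ A, ‖a - x‖ ^ 2 ≤ 2 * A.card * ∑ a ∈ A, ‖a - μ‖ ^ 2 := by
  have hcross : ∑ x ∈ A, ∑ a ∈ A, inner ℝ (a - μ) (x - μ) = ‖∑ a ∈ A, (a - μ)‖ ^ 2 := by
    rw [← real_inner_self_eq_norm_sq, inner_sum]
    exact sum_congr rfl fun x _ => (sum_inner _ _ _).symm
  calc ∑ x ∈ A, ∑ a ∈ A, ‖a - x‖ ^ 2
      = ∑ x ∈ A, ∑ a ∈ A, (‖a - μ‖ ^ 2 + ‖x - μ‖ ^ 2 - 2 * inner ℝ (a - μ) (x - μ)) := by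
        refine sum_congr rfl fun x _ => sum_congr rfl fun a _ => ?_
        rw [show a - x = (a - μ) - (x - μ) by abel, norm_sub_sq_real]
        ring
    _ = 2 * A.card * ∑ a ∈ A, ‖a - μ‖ ^ 2 - 2 * ‖∑ a ∈ A, (a - μ)‖ ^ 2 := by
        simp only [sum_sub_distrib, sum_add_distrib, sum_const, nsmul_eq_mul, ← mul_sum,
          hcross]
        ring
    _ ≤ 2 * A.card * ∑ a ∈ A, ‖a - μ‖ ^ 2 := sub_le_self _ (by positivity)

section Cost

variable {d : ℕ}

theorem phiPt_nonneg (x : EuclideanSpace ℝ (Fin d)) (S : Finset (EuclideanSpace ℝ (Fin d))) :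
    0 ≤ phiPt x S :=
  Real.sInf_nonneg <| by rintro _ ⟨s, _, rfl⟩; positivity

theorem phiPt_le_norm_sub_sq (x : EuclideanSpace ℝ (Fin d))
    {S : Finset (EuclideanSpace ℝ (Fin d))} {s : EuclideanSpace ℝ (Fin d)} (hs : s ∈ S) :
    phiPt x S ≤ ‖x - s‖ ^ 2 :=
  csInf_le ⟨0, by rintro _ ⟨t, _, rfl⟩; positivity⟩ ⟨s, hs, rfl⟩

theorem exists_mem_phiPt_eq (x : EuclideanSpace ℝ (Fin d))
    {S : Finset (EuclideanSpace ℝ (Fin d))} (hS : S.Nonempty) :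
    ∃ s ∈ S, phiPt x S = ‖x - s‖ ^ 2 := by
  obtain ⟨s, hs, h⟩ := ((coe_nonempty.2 hS).image fun s => ‖x - s‖ ^ 2).csInf_mem
    (S.finite_toSet.image _)
  exact ⟨s, hs, h.symm⟩

theorem phiPt_singleton (x μ : EuclideanSpace ℝ (Fin d)) : phiPt x {μ} = ‖x - μ‖ ^ 2 := by
  simp [phiPt]

theorem phiPt_le_of_subset (x : EuclideanSpace ℝ (Fin d))
    {S T : Finset (EuclideanSpace ℝ (Fin d))} (hS : S.Nonempty) (hST : S ⊆ T) :
    phiPt x T ≤ phiPt x S := by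
  obtain ⟨s, hs, h⟩ := exists_mem_phiPt_eq x hS
  exact h ▸ phiPt_le_norm_sub_sq x (hST hs)

theorem phiPt_le_two_mul_phiPt_add (x a : EuclideanSpace ℝ (Fin d))
    {S : Finset (EuclideanSpace ℝ (Fin d))} (hS : S.Nonempty) :
    phiPt x S ≤ 2 * phiPt a S + 2 * ‖a - x‖ ^ 2 := by
  obtain ⟨s, hs, h⟩ := exists_mem_phiPt_eq a hS
  have htri : ‖x - s‖ ≤ ‖a - x‖ + ‖a - s‖ := by
    simpa only [dist_eq_norm, norm_sub_rev x a] using dist_triangle x a s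
  rw [h]
  nlinarith [phiPt_le_norm_sub_sq x hs, norm_nonneg (x - s), sq_nonneg (‖a - x‖ - ‖a - s‖)]

theorem phi_nonneg (A S : Finset (EuclideanSpace ℝ (Fin d))) : 0 ≤ phi A S :=
  sum_nonneg fun x _ => phiPt_nonneg x S

theorem phi_le_of_subset (A : Finset (EuclideanSpace ℝ (Fin d)))
    {S T : Finset (EuclideanSpace ℝ (Fin d))} (hS : S.Nonempty) (hST : S ⊆ T) :
    phi A T ≤ phi A S :=
  sum_le_sum fun x _ => phiPt_le_of_subset x hS hST

theorem phi_singleton (A : Finset (EuclideanSpace ℝ (Fin d))) (μ : EuclideanSpace ℝ (Fin d)) :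
    phi A {μ} = ∑ a ∈ A, ‖a - μ‖ ^ 2 := by
  simp only [phi, phiPt_singleton]

theorem card_mul_phiPt_le (A : Finset (EuclideanSpace ℝ (Fin d)))
    {S : Finset (EuclideanSpace ℝ (Fin d))} (hS : S.Nonempty) (x : EuclideanSpace ℝ (Fin d)) :
    A.card * phiPt x S ≤ 2 * phi A S + 2 * phi A {x} := by
  calc A.card * phiPt x S = ∑ _a ∈ A, phiPt x S := by rw [sum_const, nsmul_eq_mul]
    _ ≤ ∑ a ∈ A, (2 * phiPt a S + 2 * ‖a - x‖ ^ 2) :=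
        sum_le_sum fun a _ => phiPt_le_two_mul_phiPt_add x a hS
    _ = 2 * phi A S + 2 * phi A {x} := by
        rw [sum_add_distrib, ← mul_sum, ← mul_sum, phi_singleton, phi]

theorem card_mul_phiPt_mul_phi_insert_le (A : Finset (EuclideanSpace ℝ (Fin d)))
    {S : Finset (EuclideanSpace ℝ (Fin d))} (hS : S.Nonempty) (x : EuclideanSpace ℝ (Fin d)) :
    A.card * (phiPt x S * phi A (insert x S)) ≤ 4 * phi A S * phi A {x} := by
  have hx : phi A (insert x S) ≤ phi A {x} :=
    phi_le_of_subset A (singleton_nonempty x) (singleton_subset_iff.2 (mem_insert_self x S))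
  have hS' : phi A (insert x S) ≤ phi A S := phi_le_of_subset A hS (subset_insert x S)
  have hpt := card_mul_phiPt_le A hS x
  nlinarith [phi_nonneg A (insert x S), phi_nonneg A S, phi_nonneg A {x}]

theorem sum_phi_singleton_le (A : Finset (EuclideanSpace ℝ (Fin d)))
    (μ : EuclideanSpace ℝ (Fin d)) :
    ∑ x ∈ A, phi A {x} ≤ 2 * A.card * phi A {μ} := by
  simpa only [phi_singleton] using sum_sum_norm_sub_sq_le A μ

end Cost

/-- key lemma of Arthur–Vassilvitskii `D²` sampling, restricted to one
cluster. If a point `x` is sampled from `A` with probability proportional to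
`φ_{{x}}(S)`, the expected cost of `A` after adding `x` as a center is at most
`8·φ_A({μ})`. -/
theorem stmt11 {d : ℕ} (A S : Finset (EuclideanSpace ℝ (Fin d)))
    (hA : A.Nonempty) (hS : S.Nonempty) (hpos : 0 < phi A S) :
    ∑ x ∈ A, (phiPt x S / phi A S) * phi A (insert x S) ≤ 8 * phi A {mean A} := by
  have hcard : (0 : ℝ) < A.card := by exact_mod_cast hA.card_pos
  have hsum : A.card * ∑ x ∈ A, phiPt x S * phi A (insert x S)
      ≤ A.card * (8 * phi A {mean A} * phi A S) :=
    calc A.card * ∑ x ∈ A, phiPt x S * phi A (insert x S)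
        ≤ ∑ x ∈ A, 4 * phi A S * phi A {x} := by
          rw [mul_sum]; exact sum_le_sum fun x _ => card_mul_phiPt_mul_phi_insert_le A hS x
      _ ≤ 4 * phi A S * (2 * A.card * phi A {mean A}) := by
          rw [← mul_sum]; gcongr; exact sum_phi_singleton_le A (mean A)
      _ = A.card * (8 * phi A {mean A} * phi A S) := by ring
  simp only [div_mul_eq_mul_div, ← sum_div]
  rw [div_le_iff₀ hpos]
  exact le_of_mul_le_mul_left hsum hcard
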